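/- Define T*_α X = r_#(S*_X α) + [r_#(α), X]_S and R^∇(X,α)Y = S_X(T*_α Y) − T*_α(S_X Y) + S_{T*_α X} Y − T*_{S*_X α} Y. Then R^∇(X,α)Y is symmetric in X and Y: R^∇(X,α)Y = R^∇(Y,α)X for all X, Y ∈ 𝔄 and α ∈ 𝔄'. (First identity of Lemma 'lemma', Section 4.) -/
import Mathlib


/-!
Statement 12 (first identity of Lemma `lemma`, Section 4): with
`T*_α X = r_#(S*_X α) + [r_#(α), X]_S` and
`R^∇(X,α)Y = S_X(T*_α Y) − T*_α(S_X Y) + S_{T*_α X} Y − T*_{S*_X α} Y`,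
one has `R^∇(X,α)Y = R^∇(Y,α)X`.
-/

section

variable {R : Type*} [CommRing R] [Algebra ℝ R]
variable {A : Type*} [AddCommGroup A] [Module R A] [Module ℝ A] [IsScalarTower ℝ R A]
variable {A' : Type*} [AddCommGroup A'] [Module R A'] [Module ℝ A'] [IsScalarTower ℝ R A']

/-- `T*_α X = r_#(S*_X α) + [r_#(α), X]_S`. -/
def TstarR (S : A →ₗ[ℝ] A →ₗ[ℝ] A) (Sstar : A → A' → A') (rsharp : A' →ₗ[R] A)
    (α : A') (X : A) : A :=
  rsharp (Sstar X α) + (S (rsharp α) X - S X (rsharp α))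

/-- `R^∇(X,α)Y = S_X(T*_α Y) − T*_α(S_X Y) + S_{T*_α X} Y − T*_{S*_X α} Y`. -/
def curvXα (S : A →ₗ[ℝ] A →ₗ[ℝ] A) (Sstar : A → A' → A') (rsharp : A' →ₗ[R] A)
    (X : A) (α : A') (Y : A) : A :=
  S X (TstarR S Sstar rsharp α Y) - TstarR S Sstar rsharp α (S X Y)
    + S (TstarR S Sstar rsharp α X) Y - TstarR S Sstar rsharp (Sstar X α) Y

theorem stmt12
    (pa : A' →ₗ[R] A →ₗ[R] R)
    (hnd1 : ∀ α : A', (∀ X : A, pa α X = 0) → α = 0)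
    (hnd2 : ∀ X : A, (∀ α : A', pa α X = 0) → X = 0)
    (ρ : A →ₗ[R] Derivation ℝ R R)
    (S : A →ₗ[ℝ] A →ₗ[ℝ] A)
    (hS1 : ∀ (f : R) (X Y : A), S (f • X) Y = f • S X Y)
    (hS2 : ∀ (X : A) (f : R) (Y : A), S X (f • Y) = f • S X Y + ρ X f • Y)
    (hSflat : ∀ X Y Z : A, S X (S Y Z) - S Y (S X Z) = S (S X Y - S Y X) Z)
    (hρ : ∀ (X Y : A) (f : R),
      ρ (S X Y - S Y X) f = ρ X (ρ Y f) - ρ Y (ρ X f))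
    (Sstar : A → A' → A')
    (hSstar : ∀ (X : A) (α : A') (Y : A),
      pa (Sstar X α) Y = ρ X (pa α Y) - pa α (S X Y))
    (rsharp : A' →ₗ[R] A) :
    ∀ (X Y : A) (α : A'),
      curvXα S Sstar rsharp X α Y = curvXα S Sstar rsharp Y α X := by
  have factA : ∀ (X Y : A) (α : A'),
      Sstar (S X Y) α = Sstar (S Y X) α + Sstar X (Sstar Y α) - Sstar Y (Sstar X α) := by
    intro X Y α
    have h : ∀ Z : A,
        pa (Sstar (S X Y) α - (Sstar (S Y X) α + Sstar X (Sstar Y α) - Sstar Y (Sstar X α))) Z = 0 := by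
      intro Z
      have h1 : ρ (S X Y) (pa α Z) - ρ (S Y X) (pa α Z)
          = ρ X (ρ Y (pa α Z)) - ρ Y (ρ X (pa α Z)) := by
        have := hρ X Y (pa α Z)
        simpa [map_sub] using this
      have h2 : pa α (S (S X Y) Z) - pa α (S (S Y X) Z)
          = pa α (S X (S Y Z)) - pa α (S Y (S X Z)) := by
        have h' : S (S X Y) Z - S (S Y X) Z = S X (S Y Z) - S Y (S X Z) := by
          rw [hSflat X Y Z]; simp [map_sub]
        rw [← map_sub, ← map_sub, h']
      simp only [map_sub, map_add, LinearMap.sub_apply, LinearMap.add_apply, hSstar]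
      linear_combination h1 - h2
    have h0 := hnd1 _ (fun Z => h Z)
    rw [sub_eq_zero] at h0
    exact h0
  intro X Y α
  simp only [curvXα, TstarR, map_add, map_sub, LinearMap.add_apply, LinearMap.sub_apply]
  rw [factA X Y α]
  set m := rsharp α with hm
  have e1 := eq_add_of_sub_eq (hSflat X m Y)
  have e2 := eq_add_of_sub_eq (hSflat Y m X)
  have e3 := eq_add_of_sub_eq (hSflat X Y m)
  rw [e1, e2, e3]
  simp only [map_sub, map_add, LinearMap.sub_apply, LinearMap.add_apply]
  abel


end
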